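/- For all positive integers s and t with s > 1 and t > 1, 2·K(s,t) ≤ R(s,t)·K(s,t-1) < 3·K(s,t); equivalently, 2·K(s,t)/K(s,t-1) ≤ R(s,t) < 3·K(s,t)/K(s,t-1). -/
import Mathlib


/-- The pair `(K(s,t), K'(s,t))` of auxiliary functions, defined for positive integers `s, t`:
`K(1,t) = 2`, `K'(1,t) = 5`; `K(s,1) = 2^s`, `K'(s,1) = 2^s + 3`; and for `s, t > 1`,
`K(s,t) = K(s,t-1) * K(s-1, K'(s,t-1))` and
`K'(s,t) = K'(s,t-1) * K(s-1, K'(s,t-1)) + K'(s-1, K'(s,t-1))`.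
(The value at arguments equal to `0` is junk.) -/
def KK : ℕ → ℕ → ℕ × ℕ
  | 0, _ => (0, 0)
  | 1, _ => (2, 5)
  | _+2, 0 => (0, 0)
  | s+2, 1 => (2^(s+2), 2^(s+2) + 3)
  | s+2, t+2 =>
    let p := KK (s+2) (t+1)
    let q := KK (s+1) p.2
    (p.1 * q.1, p.2 * q.1 + q.2)
termination_by s t => (s, t)

/-- The function `K(s,t)`. -/
def K (s t : ℕ) : ℕ := (KK s t).1

/-- The function `K'(s,t)`. -/
def K' (s t : ℕ) : ℕ := (KK s t).2

/-- The function `R(s,t)` (root triangles minus teeth of `X(s,t)`), defined for positive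
integers `s, t`: `R(1,t) = 0`, `R(s,1) = 0`, and
`R(s,t) = 2 * K(s-1, K'(s,t-1)) + R(s-1, K'(s,t-1))` for `s, t > 1`.
(The value at arguments equal to `0` is junk.) -/
def R : ℕ → ℕ → ℕ
  | 0, _ => 0
  | 1, _ => 0
  | _+2, 0 => 0
  | _+2, 1 => 0
  | s+2, t+2 => 2 * K (s+1) (K' (s+2) (t+1)) + R (s+1) (K' (s+2) (t+1))
termination_by s t => (s, t)

lemma KK_step (s t : ℕ) : KK (s+2) (t+2) =
    ((KK (s+2) (t+1)).1 * (KK (s+1) (KK (s+2) (t+1)).2).1,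
     (KK (s+2) (t+1)).2 * (KK (s+1) (KK (s+2) (t+1)).2).1 + (KK (s+1) (KK (s+2) (t+1)).2).2) := by
  rw [KK]

lemma KK_pos : ∀ s, 1 ≤ s → ∀ t, 1 ≤ t → 0 < (KK s t).1 ∧ 0 < (KK s t).2 := by
  intro s
  induction s using Nat.strong_induction_on with
  | _ s ihs =>
    match s with
    | 0 => intro h; omega
    | 1 => intro _ t _; simp [KK]
    | s+2 =>
      intro _ t
      induction t using Nat.strong_induction_on with
      | _ t iht =>
        match t with
        | 0 => intro h; omega
        | 1 => intro _; simp [KK]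
        | t+2 =>
          intro _
          rw [KK_step]
          have h1 := iht (t+1) (by omega) (by omega)
          have h2 := ihs (s+1) (by omega) (by omega) (KK (s+2) (t+1)).2 h1.2
          exact ⟨Nat.mul_pos h1.1 h2.1, by omega⟩

lemma K_ge (s t : ℕ) (ht : 1 ≤ t) : 3 ≤ K (s+2) t := by
  induction t using Nat.strong_induction_on with
  | _ t iht =>
    match t with
    | 0 => omega
    | 1 =>
      show 3 ≤ (KK (s+2) 1).1
      simp [KK]
      calc 3 ≤ 2^2 := by norm_num
      _ ≤ 2^(s+2) := Nat.pow_le_pow_right (by norm_num) (by omega)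
    | t+2 =>
      have h1 := KK_pos (s+2) (by omega) (t+1) (by omega)
      have h2 := (KK_pos (s+1) (by omega) (KK (s+2) (t+1)).2 h1.2).1
      have h3 := iht (t+1) (by omega) (by omega)
      show 3 ≤ (KK (s+2) (t+2)).1
      rw [KK_step]
      calc 3 ≤ K (s+2) (t+1) * 1 := by simpa using h3
      _ ≤ (KK (s+2) (t+1)).1 * (KK (s+1) (KK (s+2) (t+1)).2).1 :=
        Nat.mul_le_mul_left _ h2

lemma R_lt_K : ∀ s, 1 ≤ s → ∀ t, 1 ≤ t → R s t < K s t := by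
  intro s
  induction s using Nat.strong_induction_on with
  | _ s ihs =>
    match s with
    | 0 => intro h; omega
    | 1 => intro _ t _; show R 1 t < (KK 1 t).1; simp [R, KK]
    | s+2 =>
      intro _ t
      match t with
      | 0 => intro h; omega
      | 1 =>
        intro _
        have := KK_pos (s+2) (by omega) 1 le_rfl
        show R (s+2) 1 < K (s+2) 1
        simp only [R]
        exact this.1
      | t+2 =>
        intro _
        have h1 := KK_pos (s+2) (by omega) (t+1) (by omega)
        have hu : 1 ≤ K' (s+2) (t+1) := h1.2
        have hR := ihs (s+1) (by omega) (by omega) (K' (s+2) (t+1)) hu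
        have h3 := K_ge s (t+1) (by omega)
        show R (s+2) (t+2) < K (s+2) (t+2)
        rw [R]
        have hK : K (s+2) (t+2) = K (s+2) (t+1) * K (s+1) (K' (s+2) (t+1)) := by
          show (KK (s+2) (t+2)).1 = _
          rw [KK_step]
          rfl
        rw [hK]
        calc 2 * K (s+1) (K' (s+2) (t+1)) + R (s+1) (K' (s+2) (t+1))
            < 2 * K (s+1) (K' (s+2) (t+1)) + K (s+1) (K' (s+2) (t+1)) := by omega
        _ = 3 * K (s+1) (K' (s+2) (t+1)) := by ring
        _ ≤ K (s+2) (t+1) * K (s+1) (K' (s+2) (t+1)) := Nat.mul_le_mul_right _ h3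

/-- Lemma (R-bounds): for all positive integers `s, t > 1`,
`2 * K(s,t)/K(s,t-1) ≤ R(s,t) < 3 * K(s,t)/K(s,t-1)`; in integer form,
`2 * K(s,t) ≤ R(s,t) * K(s,t-1)` and `R(s,t) * K(s,t-1) < 3 * K(s,t)`. -/
theorem R_bounds (s t : ℕ) (hs : 1 < s) (ht : 1 < t) :
    2 * K s t ≤ R s t * K s (t - 1) ∧ R s t * K s (t - 1) < 3 * K s t := by

  obtain ⟨s, rfl⟩ : ∃ s', s = s' + 2 := ⟨s - 2, by omega⟩
  obtain ⟨t, rfl⟩ : ∃ t', t = t' + 2 := ⟨t - 2, by omega⟩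
  have hsimp : t + 2 - 1 = t + 1 := rfl
  rw [hsimp]
  have h1 := KK_pos (s+2) (by omega) (t+1) (by omega)
  have hu : 1 ≤ K' (s+2) (t+1) := h1.2
  have hKpos : 0 < K (s+2) (t+1) := h1.1
  have hR := R_lt_K (s+1) (by omega) (K' (s+2) (t+1)) hu
  have hK : K (s+2) (t+2) = K (s+2) (t+1) * K (s+1) (K' (s+2) (t+1)) := by
    show (KK (s+2) (t+2)).1 = _
    rw [KK_step]
    rfl
  have hRdef : R (s+2) (t+2) = 2 * K (s+1) (K' (s+2) (t+1)) + R (s+1) (K' (s+2) (t+1)) := by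
    rw [R]
  rw [hK, hRdef]
  constructor
  · nlinarith
  · nlinarith
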